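/- arXiv:1903.10562 — 2 statements merged into one kernel-verified Lean document; each statement's English description precedes it below -/
import Mathlib

section
/- Let p < p' ≤ q' < q be natural numbers, and let a_p, a_q, a_{p'}, a_{q'} : ℝ → ℝ be functions such that for every h ≥ 0 and each n ∈ {p, q, p', q'}, the value a_n(h) is an n-th Robin parameter for h. If a_p(h*)² + a_q(h*)² = a_{p'}(h*)² + a_{q'}(h*)² for some h* ≥ 0, then for every h > h* one has a_p(h)² + a_q(h)² < a_{p'}(h)² + a_{q'}(h)². -/
/-!
On `[nπ, (n+1)π)` the Robin condition for `α` is equivalent to `α tan ((α - nπ)/2) = hπ`, whose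
left side is strictly increasing from `0` to `∞`. So a branch `a_n` is the inverse of this map
divided by `π`: it is continuous on `[0, ∞)` and `(a_n²)' = 4π a_n² / (a_n² + 2hπ + h²π²)` for
`h > 0`. For the gap `g = a_{p'}² + a_{q'}² - a_p² - a_q²` the ordering
`a_p < a_{p'} ≤ a_{q'} < a_q` and `a_{q'} ≥ π` give `g' > (4/π) g` wherever `g ≤ 0`. Then
`g e^{-4h/π}` has positive derivative wherever it is nonpositive, and such a function, nonnegative
at `h*`, is positive on `(h*, ∞)`: otherwise its minimum on `[h*, h]` is nonpositive and attained
at a point of `(h*, h]`, where the derivative from the left cannot be positive.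
-/

open Real

/-- `α` is an `n`-th Robin parameter for `h`: `nπ ≤ α < (n+1)π` and `α` satisfies
`α·sin(α/2) = hπ·cos(α/2)` if `n` is even, `α·cos(α/2) = −hπ·sin(α/2)` if `n` is odd. -/
def IsRobinParam (n : ℕ) (h α : ℝ) : Prop :=
  (n : ℝ) * π ≤ α ∧ α < ((n : ℝ) + 1) * π ∧
    (if Even n then α * Real.sin (α / 2) = h * π * Real.cos (α / 2)
     else α * Real.cos (α / 2) = -(h * π) * Real.sin (α / 2))

open Set

noncomputable def robinFn (n : ℕ) (α : ℝ) : ℝ := α * tan ((α - n * π) / 2)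

theorem robin_equation_iff (n : ℕ) (h α : ℝ) :
    (if Even n then α * sin (α / 2) = h * π * cos (α / 2)
      else α * cos (α / 2) = -(h * π) * sin (α / 2)) ↔
      α * sin ((α - n * π) / 2) = h * π * cos ((α - n * π) / 2) := by
  set β := (α - n * π) / 2
  have hsign (k : ℕ) : ((-1 : ℝ) ^ k) ≠ 0 := pow_ne_zero _ (by norm_num)
  rcases Nat.even_or_odd' n with ⟨k, rfl | rfl⟩
  · have hα : α / 2 = β + k * π := by simp only [β]; push_cast; ring
    rw [if_pos (even_two_mul k), hα, sin_add_nat_mul_pi, cos_add_nat_mul_pi,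
      mul_left_comm, mul_left_comm (h * π), mul_right_inj' (hsign k)]
  · have hα : α / 2 = (β + π / 2) + k * π := by simp only [β]; push_cast; ring
    rw [if_neg (Nat.not_even_iff_odd.2 (odd_two_mul_add_one k)), hα, sin_add_nat_mul_pi,
      cos_add_nat_mul_pi, sin_add_pi_div_two, cos_add_pi_div_two,
      show α * ((-1) ^ k * -sin β) = -(-1) ^ k * (α * sin β) by ring,
      show -(h * π) * ((-1) ^ k * cos β) = -(-1) ^ k * (h * π * cos β) by ring,
      mul_right_inj' (neg_ne_zero.2 (hsign k))]

theorem half_sub_mem_Ico {n : ℕ} {α : ℝ} (hα : α ∈ Ico (n * π) ((n + 1) * π)) :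
    (α - n * π) / 2 ∈ Ico 0 (π / 2) :=
  ⟨by linarith [hα.1], by linarith [hα.2]⟩

theorem cos_half_sub_pos {n : ℕ} {α : ℝ} (hα : α ∈ Ico (n * π) ((n + 1) * π)) :
    0 < cos ((α - n * π) / 2) :=
  cos_pos_of_mem_Ioo ⟨by linarith [pi_pos, (half_sub_mem_Ico hα).1], (half_sub_mem_Ico hα).2⟩

theorem tan_half_sub_nonneg {n : ℕ} {α : ℝ} (hα : α ∈ Ico (n * π) ((n + 1) * π)) :
    0 ≤ tan ((α - n * π) / 2) :=
  tan_nonneg_of_nonneg_of_le_pi_div_two (half_sub_mem_Ico hα).1 (half_sub_mem_Ico hα).2.le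

theorem nonneg_of_mem_Ico_mul_pi {n : ℕ} {α : ℝ} (hα : α ∈ Ico (n * π) ((n + 1) * π)) : 0 ≤ α :=
  le_trans (by positivity) hα.1

theorem robinFn_nonneg {n : ℕ} {α : ℝ} (hα : α ∈ Ico (n * π) ((n + 1) * π)) :
    0 ≤ robinFn n α :=
  mul_nonneg (nonneg_of_mem_Ico_mul_pi hα) (tan_half_sub_nonneg hα)

theorem robinFn_strictMonoOn (n : ℕ) : StrictMonoOn (robinFn n) (Ico (n * π) ((n + 1) * π)) := by
  intro α hα β hβ hαβ
  have htan : tan ((α - n * π) / 2) < tan ((β - n * π) / 2) :=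
    strictMonoOn_tan ⟨by linarith [pi_pos, (half_sub_mem_Ico hα).1], (half_sub_mem_Ico hα).2⟩
      ⟨by linarith [pi_pos, (half_sub_mem_Ico hβ).1], (half_sub_mem_Ico hβ).2⟩ (by linarith)
  have := nonneg_of_mem_Ico_mul_pi hα
  have := tan_half_sub_nonneg hα
  unfold robinFn
  nlinarith

theorem isRobinParam_iff {n : ℕ} {h α : ℝ} :
    IsRobinParam n h α ↔ α ∈ Ico (n * π) ((n + 1) * π) ∧ robinFn n α = h * π := by
  rw [IsRobinParam, robin_equation_iff, ← and_assoc, ← mem_Ico]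
  refine and_congr_right fun hα => ?_
  rw [robinFn, tan_eq_sin_div_cos, ← mul_div_assoc, div_eq_iff (cos_half_sub_pos hα).ne']

theorem IsRobinParam.mem_Ico {n : ℕ} {h α : ℝ} (hα : IsRobinParam n h α) :
    α ∈ Ico (n * π) ((n + 1) * π) :=
  (isRobinParam_iff.1 hα).1

theorem IsRobinParam.robinFn_eq {n : ℕ} {h α : ℝ} (hα : IsRobinParam n h α) :
    robinFn n α = h * π :=
  (isRobinParam_iff.1 hα).2

theorem isRobinParam_robinFn_div_pi {n : ℕ} {α : ℝ} (hα : α ∈ Ico (n * π) ((n + 1) * π)) :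
    IsRobinParam n (robinFn n α / π) α :=
  isRobinParam_iff.2 ⟨hα, (div_mul_cancel₀ _ pi_ne_zero).symm⟩

theorem IsRobinParam.unique {n : ℕ} {h α β : ℝ} (hα : IsRobinParam n h α)
    (hβ : IsRobinParam n h β) : α = β :=
  (robinFn_strictMonoOn n).injOn hα.mem_Ico hβ.mem_Ico (hα.robinFn_eq.trans hβ.robinFn_eq.symm)

theorem IsRobinParam.lt_of_lt {m n : ℕ} {h α β : ℝ} (hmn : m < n) (hα : IsRobinParam m h α)
    (hβ : IsRobinParam n h β) : α < β :=
  calc α < (m + 1) * π := hα.mem_Ico.2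
    _ ≤ n * π := by gcongr; exact_mod_cast hmn
    _ ≤ β := hβ.mem_Ico.1

theorem IsRobinParam.le_of_le {m n : ℕ} {h α β : ℝ} (hmn : m ≤ n) (hα : IsRobinParam m h α)
    (hβ : IsRobinParam n h β) : α ≤ β := by
  rcases hmn.eq_or_lt with rfl | hmn
  · exact (hα.unique hβ).le
  · exact (hα.lt_of_lt hmn hβ).le

theorem hasDerivAt_robinFn (n : ℕ) {α : ℝ} (hα : cos ((α - n * π) / 2) ≠ 0) :
    HasDerivAt (robinFn n)
      (tan ((α - n * π) / 2) + α / (2 * cos ((α - n * π) / 2) ^ 2)) α := by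
  have hβ : HasDerivAt (fun x : ℝ => (x - n * π) / 2) (1 / 2) α := by
    simpa using ((hasDerivAt_id α).sub_const ((n : ℝ) * π)).div_const 2
  refine ((hasDerivAt_id' α).mul ((hasDerivAt_tan hα).comp α hβ)).congr_deriv ?_
  simp only [Function.comp_apply]
  ring

def IsRobinBranch (n : ℕ) (a : ℝ → ℝ) : Prop := ∀ h : ℝ, 0 ≤ h → IsRobinParam n h (a h)

namespace IsRobinBranch

variable {n : ℕ} {a : ℝ → ℝ}

theorem strictMonoOn (ha : IsRobinBranch n a) : StrictMonoOn a (Ici 0) := by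
  intro x hx y hy hxy
  refine ((robinFn_strictMonoOn n).lt_iff_lt (ha x hx).mem_Ico (ha y hy).mem_Ico).1 ?_
  rw [(ha x hx).robinFn_eq, (ha y hy).robinFn_eq]
  exact mul_lt_mul_of_pos_right hxy pi_pos

theorem image_Ici (ha : IsRobinBranch n a) : a '' Ici 0 = Ico (n * π) ((n + 1) * π) := by
  refine Subset.antisymm (image_subset_iff.2 fun h hh => (ha h hh).mem_Ico) fun α hα => ?_
  have hh : 0 ≤ robinFn n α / π := div_nonneg (robinFn_nonneg hα) pi_pos.le
  exact ⟨_, hh, (ha _ hh).unique (isRobinParam_robinFn_div_pi hα)⟩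

theorem lt_of_pos (ha : IsRobinBranch n a) {z : ℝ} (hz : 0 < z) : n * π < a z :=
  lt_of_le_of_lt (ha 0 le_rfl).mem_Ico.1 (ha.strictMonoOn (le_refl (0 : ℝ)) hz.le hz)

theorem continuousOn (ha : IsRobinBranch n a) : ContinuousOn a (Ici 0) := by
  intro z hz
  rcases (mem_Ici.1 hz).eq_or_lt with rfl | hz
  · refine ha.strictMonoOn.continuousWithinAt_right_of_image_mem_nhdsWithin
      self_mem_nhdsWithin ?_
    rw [ha.image_Ici]
    exact Ico_mem_nhdsGE_of_mem (ha 0 le_rfl).mem_Ico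
  · refine (ha.strictMonoOn.continuousAt_of_image_mem_nhds (Ici_mem_nhds hz) ?_).continuousWithinAt
    rw [ha.image_Ici]
    exact Ico_mem_nhds (ha.lt_of_pos hz) (ha z hz.le).mem_Ico.2

theorem hasDerivAt (ha : IsRobinBranch n a) {z : ℝ} (hz : 0 < z) :
    HasDerivAt a (2 * π * a z / (a z ^ 2 + (2 * z * π + (z * π) ^ 2))) z := by
  set α := a z
  set β := (α - n * π) / 2
  have hα : 0 < α := lt_of_le_of_lt (by positivity) (ha.lt_of_pos hz)
  have hcos : cos β ≠ 0 := (cos_half_sub_pos (ha z hz.le).mem_Ico).ne'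
  have htan : tan β = z * π / α := by
    rw [eq_div_iff hα.ne', mul_comm, ← (ha z hz.le).robinFn_eq]; rfl
  have hderiv : tan β + α / (2 * cos β ^ 2) = (α ^ 2 + (2 * z * π + (z * π) ^ 2)) / (2 * α) := by
    rw [← inv_one_add_tan_sq hcos, htan]
    field_simp
    ring
  have hinv : ∀ᶠ y in nhds z, robinFn n (a y) / π = y := by
    filter_upwards [Ioi_mem_nhds hz] with y hy
    rw [(ha y hy.le).robinFn_eq, mul_div_cancel_right₀ _ pi_ne_zero]
  refine (HasDerivAt.of_local_left_inverse
    ((ha.continuousOn z hz.le).continuousAt (Ici_mem_nhds hz))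
    ((hasDerivAt_robinFn n hcos).div_const π) ?_ hinv).congr_deriv ?_
  · rw [hderiv]; positivity
  · rw [hderiv]; field_simp

theorem hasDerivAt_sq (ha : IsRobinBranch n a) {z : ℝ} (hz : 0 < z) :
    HasDerivAt (fun y => a y ^ 2) (4 * π * (a z ^ 2 / (a z ^ 2 + (2 * z * π + (z * π) ^ 2)))) z := by
  refine ((ha.hasDerivAt hz).pow 2).congr_deriv ?_
  push_cast
  ring

end IsRobinBranch

theorem pos_of_hasDerivAt_pos_of_nonpos {f : ℝ → ℝ} {a b : ℝ} (hab : a < b)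
    (hf : ContinuousOn f (Icc a b)) (ha : 0 ≤ f a)
    (hderiv : ∀ y ∈ Ioc a b, f y ≤ 0 → ∃ d, HasDerivAt f d y ∧ 0 < d) : 0 < f b := by
  by_contra! hb
  obtain ⟨z, hz, hmin⟩ := isCompact_Icc.exists_isMinOn (nonempty_Icc.2 hab.le) hf
  -- if the minimum sits at `a`, it is `0 = f b`, so it is also attained at `b`
  obtain ⟨z, hz, hmin⟩ : ∃ z ∈ Ioc a b, IsMinOn f (Icc a b) z := by
    rcases hz.1.eq_or_lt with rfl | hza
    · exact ⟨b, right_mem_Ioc.2 hab, fun x hx => (hb.trans ha).trans (hmin hx)⟩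
    · exact ⟨z, ⟨hza, hz.2⟩, hmin⟩
  obtain ⟨d, hd, hd0⟩ := hderiv z hz ((hmin ⟨hab.le, le_rfl⟩).trans hb)
  have hleft : a - z ∈ posTangentConeAt (Icc a b) z :=
    sub_mem_posTangentConeAt_of_segment_subset
      ((convex_Icc a b).segment_subset ⟨hz.1.le, hz.2⟩ ⟨le_rfl, hab.le⟩)
  have hleft_deriv : 0 ≤ (a - z) * d := by
    simpa only [ContinuousLinearMap.toSpanSingleton_apply, smul_eq_mul] using
      hmin.localize.hasFDerivWithinAt_nonneg hd.hasFDerivAt.hasFDerivWithinAt hleft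
  nlinarith [hz.1]

theorem pos_of_hasDerivAt_gt_mul_of_nonpos {f : ℝ → ℝ} {a b k : ℝ} (hab : a < b)
    (hf : ContinuousOn f (Icc a b)) (ha : 0 ≤ f a)
    (hderiv : ∀ y ∈ Ioc a b, f y ≤ 0 → ∃ d, HasDerivAt f d y ∧ k * f y < d) : 0 < f b := by
  have hmb : 0 < exp (-k * b) * f b := by
    refine pos_of_hasDerivAt_pos_of_nonpos (f := fun y => exp (-k * y) * f y) hab
      (by fun_prop) (by positivity) fun y hy hmy => ?_
    obtain ⟨d, hd, hkd⟩ := hderiv y hy (nonpos_of_mul_nonpos_right hmy (exp_pos _))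
    refine ⟨_, ((hasDerivAt_id' y).const_mul (-k)).exp.mul hd, ?_⟩
    have := exp_pos (-k * y)
    nlinarith
  exact pos_of_mul_pos_right hmb (exp_pos _).le

theorem sub_div_lt_of_spread {A B C D c : ℝ} (hA : 0 ≤ A) (hAB : A < B) (hBC : B ≤ C)
    (hCD : C < D) (hc : 0 < c) (hg : B + C ≤ A + D) :
    (B + C - (A + D)) / C < B / (B + c) + C / (C + c) - (A / (A + c) + D / (D + c)) := by
  have hC : 0 < C := by linarith
  have hAc : 0 < A + c := by linarith
  have hBc : 0 < B + c := by linarith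
  have hCc : 0 < C + c := by linarith
  have hDc : 0 < D + c := by linarith
  have hprod : (A + c) * (B + c) < (C + c) * (D + c) := by nlinarith
  have hsplit : B / (B + c) + C / (C + c) - (A / (A + c) + D / (D + c)) =
      c * (B - A) * ((C + c) * (D + c) - (A + c) * (B + c)) /
          ((A + c) * (B + c) * ((C + c) * (D + c))) +
        c * (B + C - (A + D)) / ((C + c) * (D + c)) := by
    field_simp
    ring
  have hfirst : 0 < c * (B - A) * ((C + c) * (D + c) - (A + c) * (B + c)) /
      ((A + c) * (B + c) * ((C + c) * (D + c))) := by
    have := sub_pos.2 hAB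
    have := sub_pos.2 hprod
    positivity
  have hsecond : (B + C - (A + D)) / C ≤ c * (B + C - (A + D)) / ((C + c) * (D + c)) := by
    rw [div_le_div_iff₀ hC (by positivity)]
    have hD : 0 < D := by linarith
    nlinarith [mul_nonpos_of_nonneg_of_nonpos (show 0 ≤ C * D + c * D + c ^ 2 by positivity)
      (sub_nonpos.2 hg)]
  linarith

theorem exists_hasDerivAt_gt_of_nonpos {p p' q' q : ℕ} (h1 : p < p') (h2 : p' ≤ q') (h3 : q' < q)
    {ap aq ap' aq' : ℝ → ℝ} (hap : IsRobinBranch p ap) (haq : IsRobinBranch q aq)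
    (hap' : IsRobinBranch p' ap') (haq' : IsRobinBranch q' aq') {y : ℝ} (hy : 0 < y)
    (hgap : ap' y ^ 2 + aq' y ^ 2 - (ap y ^ 2 + aq y ^ 2) ≤ 0) :
    ∃ d, HasDerivAt (fun y => ap' y ^ 2 + aq' y ^ 2 - (ap y ^ 2 + aq y ^ 2)) d y ∧
      4 / π * (ap' y ^ 2 + aq' y ^ 2 - (ap y ^ 2 + aq y ^ 2)) < d := by
  refine ⟨_, ((hap'.hasDerivAt_sq hy).add (haq'.hasDerivAt_sq hy)).sub
    ((hap.hasDerivAt_sq hy).add (haq.hasDerivAt_sq hy)), ?_⟩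
  have hp := hap y hy.le
  have hq := haq y hy.le
  have hp' := hap' y hy.le
  have hq' := haq' y hy.le
  have hAB : ap y ^ 2 < ap' y ^ 2 :=
    pow_lt_pow_left₀ (hp.lt_of_lt h1 hp') (nonneg_of_mem_Ico_mul_pi hp.mem_Ico) two_ne_zero
  have hBC : ap' y ^ 2 ≤ aq' y ^ 2 :=
    pow_le_pow_left₀ (nonneg_of_mem_Ico_mul_pi hp'.mem_Ico) (hp'.le_of_le h2 hq') 2
  have hCD : aq' y ^ 2 < aq y ^ 2 :=
    pow_lt_pow_left₀ (hq'.lt_of_lt h3 hq) (nonneg_of_mem_Ico_mul_pi hq'.mem_Ico) two_ne_zero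
  have hπC : π ^ 2 ≤ aq' y ^ 2 := by
    have hq'1 : (1 : ℝ) ≤ q' := by exact_mod_cast (h1.trans_le h2).pos
    exact pow_le_pow_left₀ pi_pos.le (le_trans (by nlinarith [pi_pos]) hq'.mem_Ico.1) 2
  have hspread := sub_div_lt_of_spread (sq_nonneg (ap y)) hAB hBC hCD
    (show 0 < 2 * y * π + (y * π) ^ 2 by positivity) (by linarith)
  set g := ap' y ^ 2 + aq' y ^ 2 - (ap y ^ 2 + aq y ^ 2)
  calc 4 / π * g = 4 * π * (g / π ^ 2) := by field_simp
    _ ≤ 4 * π * (g / aq' y ^ 2) := by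
      gcongr 4 * π * ?_
      rw [div_le_div_iff₀ (by positivity) ((pow_pos pi_pos 2).trans_le hπC)]
      nlinarith
    _ < _ := by
      refine (mul_lt_mul_of_pos_left hspread (by positivity)).trans_eq ?_
      ring

theorem stmt_5 (p p' q' q : ℕ) (h1 : p < p') (h2 : p' ≤ q') (h3 : q' < q)
    (ap aq ap' aq' : ℝ → ℝ)
    (hap : ∀ h : ℝ, 0 ≤ h → IsRobinParam p h (ap h))
    (haq : ∀ h : ℝ, 0 ≤ h → IsRobinParam q h (aq h))
    (hap' : ∀ h : ℝ, 0 ≤ h → IsRobinParam p' h (ap' h))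
    (haq' : ∀ h : ℝ, 0 ≤ h → IsRobinParam q' h (aq' h))
    (hstar : ℝ) (hstar0 : 0 ≤ hstar)
    (hcross : (ap hstar) ^ 2 + (aq hstar) ^ 2 = (ap' hstar) ^ 2 + (aq' hstar) ^ 2) :
    ∀ h : ℝ, hstar < h → (ap h) ^ 2 + (aq h) ^ 2 < (ap' h) ^ 2 + (aq' h) ^ 2 := by
  intro h hh
  have hsub : Icc hstar h ⊆ Ici 0 := fun y hy => hstar0.trans hy.1
  have hcont : ContinuousOn (fun y => ap' y ^ 2 + aq' y ^ 2 - (ap y ^ 2 + aq y ^ 2))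
      (Icc hstar h) :=
    (((IsRobinBranch.continuousOn hap').pow 2).add ((IsRobinBranch.continuousOn haq').pow 2)).sub
      (((IsRobinBranch.continuousOn hap).pow 2).add ((IsRobinBranch.continuousOn haq).pow 2))
      |>.mono hsub
  have hgap := pos_of_hasDerivAt_gt_mul_of_nonpos hh hcont (by simp [hcross])
    fun y hy => exists_hasDerivAt_gt_of_nonpos h1 h2 h3 hap haq hap' haq' (hstar0.trans_lt hy.1)
  linarith
end

section
/- There exist real numbers h₀ > 0 and C > 0 such that for every natural number n, every real h with 0 < h ≤ h₀, and every α that is an n-th Robin parameter for h, one has n²π² ≤ α² ≤ n²π² + C·h. -/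
open Real

/-- Reduction of the Robin equation to `[0, π)`. -/
lemma robin_key {n : ℕ} {h α : ℝ} (H : IsRobinParam n h α) :
    α * Real.sin ((α - n * π) / 2) = h * π * Real.cos ((α - n * π) / 2) := by
  obtain ⟨h1, h2, h3⟩ := H
  set δ : ℝ := α - n * π with hδ
  rcases Nat.even_or_odd n with ⟨m, hm⟩ | ⟨m, hm⟩
  · rw [if_pos ⟨m, hm⟩] at h3
    have hα2 : α / 2 = δ / 2 + (m : ℝ) * π := by
      subst hm; push_cast [hδ]; ring
    rw [hα2, Real.sin_add_nat_mul_pi, Real.cos_add_nat_mul_pi] at h3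
    have hpow : ((-1 : ℝ) ^ m) * ((-1 : ℝ) ^ m) = 1 := by
      rw [← pow_add]; exact (neg_one_pow_eq_one_iff_even (by norm_num)).2 ⟨m, by ring⟩
    linear_combination ((-1 : ℝ) ^ m) * h3 +
      (h * π * Real.cos (δ / 2) - α * Real.sin (δ / 2)) * hpow
  · rw [if_neg (by simp [hm, parity_simps])] at h3
    have hα2 : α / 2 = (δ / 2 + π / 2) + (m : ℝ) * π := by
      subst hm; push_cast [hδ]; ring
    rw [hα2, Real.sin_add_nat_mul_pi, Real.cos_add_nat_mul_pi,
      Real.sin_add_pi_div_two, Real.cos_add_pi_div_two] at h3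
    have hpow : ((-1 : ℝ) ^ m) * ((-1 : ℝ) ^ m) = 1 := by
      rw [← pow_add]; exact (neg_one_pow_eq_one_iff_even (by norm_num)).2 ⟨m, by ring⟩
    linear_combination (-((-1 : ℝ) ^ m)) * h3 +
      (h * π * Real.cos (δ / 2) - α * Real.sin (δ / 2)) * hpow

theorem stmt_9 :
    ∃ h₀ > (0 : ℝ), ∃ C > (0 : ℝ), ∀ (n : ℕ) (h α : ℝ), 0 < h → h ≤ h₀ →
      IsRobinParam n h α →
        (n : ℝ) ^ 2 * π ^ 2 ≤ α ^ 2 ∧ α ^ 2 ≤ (n : ℝ) ^ 2 * π ^ 2 + C * h := by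
  refine ⟨1, one_pos, 2 * π ^ 2, by positivity, fun n h α hh _ H => ?_⟩
  have key := robin_key H
  obtain ⟨h1, h2, -⟩ := H
  have hπ := Real.pi_pos
  have hn0 : (0 : ℝ) ≤ (n : ℝ) * π := by positivity
  have hα0 : 0 ≤ α := le_trans hn0 h1
  set δ : ℝ := α - n * π with hδdef
  have hδ0 : 0 ≤ δ := by simp [hδdef]; linarith
  have hδπ : δ < π := by simp [hδdef]; nlinarith
  -- sin(δ/2) ≥ δ/π
  have hsin : δ / π ≤ Real.sin (δ / 2) := by
    have := Real.mul_le_sin (x := δ / 2) (by linarith) (by linarith)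
    calc δ / π = 2 / π * (δ / 2) := by field_simp
      _ ≤ _ := this
  have hcos : Real.cos (δ / 2) ≤ 1 := Real.cos_le_one _
  have hαδ : α * δ ≤ h * π ^ 2 := by
    have h3 : α * (δ / π) ≤ α * Real.sin (δ / 2) :=
      mul_le_mul_of_nonneg_left hsin hα0
    have h4 : h * π * Real.cos (δ / 2) ≤ h * π := by
      nlinarith [mul_le_mul_of_nonneg_left hcos (by positivity : (0:ℝ) ≤ h * π)]
    have h5 : α * (δ / π) ≤ h * π := by rw [key] at h3; linarith
    have : α * δ / π ≤ h * π := by rw [mul_div_assoc]; exact h5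
    calc α * δ = (α * δ / π) * π := by field_simp
      _ ≤ (h * π) * π := by nlinarith
      _ = h * π ^ 2 := by ring
  constructor
  · nlinarith [sq_nonneg (α - n * π)]
  · nlinarith [mul_le_mul_of_nonneg_left h1 hδ0]
end
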